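/- arXiv:1702.03750 — 2 statements merged into one kernel-verified Lean document; each statement's English description precedes it below -/
import Mathlib

section
/- Let n ≥ 2, let f be a C^∞ real-valued function on the space of real n×n matrices, and let 0 < ε ≤ 2/n. Let (Q_k)_{k≥0} be a sequence in SO(n) such that for every k ≥ 1 there exist indices 1 ≤ i_k < j_k ≤ n and an angle θ_k ∈ ℝ with: (a) |⟨ProjGrad f(Q_{k−1}), Q_{k−1} δ_{i_k,j_k}⟩| ≥ ε ‖ProjGrad f(Q_{k−1})‖; (b) θ_k is a global maximizer over ℝ of the function θ ↦ f(Q_{k−1} G(i_k,j_k,θ)); (c) Q_k = Q_{k−1} G(i_k,j_k,θ_k). Then every accumulation point Q* of the sequence (Q_k) (i.e., every limit of a convergent subsequence) satisfies ProjGrad f(Q*) = 0. -/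
open Matrix Real Filter Set

attribute [local instance] Matrix.frobeniusNormedAddCommGroup Matrix.frobeniusNormedSpace

noncomputable def frobInner {n : ℕ} (A B : Matrix (Fin n) (Fin n) ℝ) : ℝ :=
  ∑ i, ∑ j, A i j * B i j

noncomputable def frobNorm {n : ℕ} (A : Matrix (Fin n) (Fin n) ℝ) : ℝ :=
  Real.sqrt (∑ i, ∑ j, (A i j) ^ 2)

def SOn (n : ℕ) : Set (Matrix (Fin n) (Fin n) ℝ) := {Q | Qᵀ * Q = 1 ∧ Q.det = 1}

noncomputable def grad {n : ℕ} (f : Matrix (Fin n) (Fin n) ℝ → ℝ)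
    (Q : Matrix (Fin n) (Fin n) ℝ) : Matrix (Fin n) (Fin n) ℝ :=
  Matrix.of fun k l => fderiv ℝ f Q (Matrix.single k l 1)

noncomputable def Lam {n : ℕ} (f : Matrix (Fin n) (Fin n) ℝ → ℝ)
    (Q : Matrix (Fin n) (Fin n) ℝ) : Matrix (Fin n) (Fin n) ℝ :=
  (1 / 2 : ℝ) • (Qᵀ * grad f Q - (grad f Q)ᵀ * Q)

noncomputable def projGrad {n : ℕ} (f : Matrix (Fin n) (Fin n) ℝ → ℝ)
    (Q : Matrix (Fin n) (Fin n) ℝ) : Matrix (Fin n) (Fin n) ℝ := Q * Lam f Q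

noncomputable def givens {n : ℕ} (i j : Fin n) (θ : ℝ) : Matrix (Fin n) (Fin n) ℝ :=
  Matrix.of fun k l =>
    if k = i ∧ l = i then Real.cos θ
    else if k = j ∧ l = j then Real.cos θ
    else if k = j ∧ l = i then Real.sin θ
    else if k = i ∧ l = j then -Real.sin θ
    else if k = l then 1 else 0

def deltaMat {n : ℕ} (i j : Fin n) : Matrix (Fin n) (Fin n) ℝ :=
  Matrix.of fun k l => if k = j ∧ l = i then 1 else if k = i ∧ l = j then -1 else 0

/-! ### Auxiliary lemmas -/

section Aux

set_option linter.unusedTactic false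
set_option linter.unreachableTactic false

lemma frobInner_eq_trace {n : ℕ} (A B : Matrix (Fin n) (Fin n) ℝ) :
    frobInner A B = (Aᵀ * B).trace := by
  simp [frobInner, Matrix.trace, Matrix.diag, Matrix.mul_apply, Matrix.transpose_apply]
  exact Finset.sum_comm ..

lemma deltaMat_transpose {n : ℕ} {i j : Fin n} (h : i ≠ j) :
    (deltaMat i j)ᵀ = -deltaMat i j := by
  ext k l
  simp only [deltaMat, Matrix.transpose_apply, Matrix.neg_apply, Matrix.of_apply]
  split_ifs <;> simp_all

lemma frobInner_projGrad {n : ℕ} (f : Matrix (Fin n) (Fin n) ℝ → ℝ)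
    {Q : Matrix (Fin n) (Fin n) ℝ} (hQ : Qᵀ * Q = 1) {i j : Fin n} (h : i ≠ j) :
    frobInner (projGrad f Q) (Q * deltaMat i j) = frobInner (grad f Q) (Q * deltaMat i j) := by
  set G := grad f Q
  set D := deltaMat i j
  rw [frobInner_eq_trace, frobInner_eq_trace]
  have h1 : (projGrad f Q)ᵀ * (Q * D) = (Lam f Q)ᵀ * D := by
    simp only [projGrad, Matrix.transpose_mul]
    calc (Lam f Q)ᵀ * Qᵀ * (Q * D) = (Lam f Q)ᵀ * (Qᵀ * Q) * D := by
          rw [Matrix.mul_assoc, Matrix.mul_assoc, Matrix.mul_assoc]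
      _ = (Lam f Q)ᵀ * D := by rw [hQ, Matrix.mul_one]
  rw [h1]
  have h2 : (Lam f Q)ᵀ = (1/2 : ℝ) • (Gᵀ * Q - Qᵀ * G) := by
    simp [Lam, Matrix.transpose_smul, Matrix.transpose_sub, Matrix.transpose_mul]
    rfl
  rw [h2]
  have key : ((Qᵀ * G) * D).trace = -((Gᵀ * Q) * D).trace := by
    have : ((Qᵀ * G) * D).trace = (((Qᵀ * G) * D)ᵀ).trace := (Matrix.trace_transpose _).symm
    rw [this]
    simp only [Matrix.transpose_mul, Matrix.transpose_transpose, deltaMat_transpose h]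
    rw [show Dᵀ = -D from deltaMat_transpose h]
    rw [Matrix.neg_mul, Matrix.trace_neg]
    congr 1
    rw [Matrix.mul_assoc, Matrix.trace_mul_comm, Matrix.mul_assoc]
  simp only [Matrix.smul_mul, Matrix.sub_mul, Matrix.trace_smul, Matrix.trace_sub]
  rw [key]
  rw [show Gᵀ * (Q * D) = (Gᵀ * Q) * D from (Matrix.mul_assoc _ _ _).symm]
  rw [smul_eq_mul]; ring

lemma givens_zero {n : ℕ} (i j : Fin n) : givens i j 0 = 1 := by
  ext k l
  by_cases hki : k = i <;> by_cases hkj : k = j <;> by_cases hli : l = i <;>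
    by_cases hlj : l = j <;>
    simp_all [givens, Matrix.one_apply] <;> (try (intro h'; simp_all)) <;>
    (try split_ifs) <;> simp_all

lemma givens_decomp {n : ℕ} {i j : Fin n} (h : i ≠ j) (θ : ℝ) :
    givens i j θ = (1 : Matrix (Fin n) (Fin n) ℝ)
      + (Real.cos θ - 1) • (Matrix.single i i (1:ℝ) + Matrix.single j j 1)
      + Real.sin θ • deltaMat i j := by
  ext k l
  by_cases hki : k = i <;> by_cases hkj : k = j <;> by_cases hli : l = i <;>
    by_cases hlj : l = j <;>
    simp_all [givens, deltaMat, Matrix.one_apply, Matrix.single] <;>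
    (try (intro h'; simp_all)) <;> (try split_ifs) <;> (try simp_all) <;> ring

lemma hasDerivAt_givens_mul {n : ℕ} {i j : Fin n} (h : i ≠ j)
    (Q : Matrix (Fin n) (Fin n) ℝ) :
    HasDerivAt (fun θ => Q * givens i j θ) (Q * deltaMat i j) 0 := by
  have heq : (fun θ => Q * givens i j θ)
      = fun θ => (Q + Q * ((Real.cos θ - 1) • (Matrix.single i i (1:ℝ)
          + Matrix.single j j 1)))
        + Real.sin θ • (Q * deltaMat i j) := by
    funext θ
    rw [givens_decomp h θ, Matrix.mul_add, Matrix.mul_add, Matrix.mul_one, Matrix.mul_smul,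
      Matrix.mul_smul]
  rw [heq]
  have h1 : HasDerivAt (fun θ : ℝ => Real.cos θ - 1) 0 0 := by
    simpa using (Real.hasDerivAt_cos 0).sub_const 1
  have h2 : HasDerivAt (fun θ : ℝ => Real.sin θ) 1 0 := by
    simpa using Real.hasDerivAt_sin 0
  have h3 := (h1.smul_const (Q * (Matrix.single i i (1:ℝ)
      + Matrix.single j j 1))).const_add Q
  have h4 := h2.smul_const (Q * deltaMat i j)
  have := h3.add h4
  simp only [zero_smul, add_zero, one_smul, zero_add] at this
  simp only [Matrix.mul_smul]
  exact this

lemma fderiv_eq_frobInner {n : ℕ} {f : Matrix (Fin n) (Fin n) ℝ → ℝ}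
    (Q A : Matrix (Fin n) (Fin n) ℝ) :
    fderiv ℝ f Q A = frobInner (grad f Q) A := by
  conv_lhs => rw [Matrix.matrix_eq_sum_single A]
  rw [map_sum]
  unfold frobInner
  refine Finset.sum_congr rfl fun k _ => ?_
  rw [map_sum]
  refine Finset.sum_congr rfl fun l _ => ?_
  have : Matrix.single k l (A k l) = A k l • Matrix.single k l (1:ℝ) := by
    rw [Matrix.smul_single, smul_eq_mul, mul_one]
  rw [this, _root_.map_smul, smul_eq_mul, grad, Matrix.of_apply, mul_comm]

lemma hasDerivAt_f_givens {n : ℕ} {f : Matrix (Fin n) (Fin n) ℝ → ℝ}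
    (hf : ContDiff ℝ (⊤ : ℕ∞) f) {i j : Fin n} (h : i ≠ j) (Q : Matrix (Fin n) (Fin n) ℝ) :
    HasDerivAt (fun θ => f (Q * givens i j θ))
      (frobInner (grad f Q) (Q * deltaMat i j)) 0 := by
  have h1 := hasDerivAt_givens_mul h Q
  have h2 : HasFDerivAt f (fderiv ℝ f Q) ((fun θ => Q * givens i j θ) 0) := by
    simp only [givens_zero, Matrix.mul_one]
    exact (hf.differentiable (by simp) Q).hasFDerivAt
  have h3 := h2.comp_hasDerivAt 0 h1
  exact h3.congr_deriv (fderiv_eq_frobInner Q _)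

lemma exists_increase {n : ℕ} {f : Matrix (Fin n) (Fin n) ℝ → ℝ}
    (hf : ContDiff ℝ (⊤ : ℕ∞) f) {i j : Fin n} (h : i ≠ j) (Q : Matrix (Fin n) (Fin n) ℝ)
    (hne : frobInner (grad f Q) (Q * deltaMat i j) ≠ 0) :
    ∃ θ, f Q < f (Q * givens i j θ) := by
  by_contra hc
  push_neg at hc
  have hg0 : f (Q * givens i j 0) = f Q := by rw [givens_zero, Matrix.mul_one]
  have hmax : IsLocalMax (fun θ => f (Q * givens i j θ)) 0 :=
    Filter.Eventually.of_forall fun θ => by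
      simpa only [hg0] using hc θ
  exact hne (hmax.hasDerivAt_eq_zero (hasDerivAt_f_givens hf h Q))

lemma continuous_grad {n : ℕ} {f : Matrix (Fin n) (Fin n) ℝ → ℝ} (hf : ContDiff ℝ (⊤ : ℕ∞) f) :
    Continuous fun Q : Matrix (Fin n) (Fin n) ℝ => grad f Q := by
  have hc : Continuous fun Q : Matrix (Fin n) (Fin n) ℝ => fderiv ℝ f Q :=
    hf.continuous_fderiv (by simp)
  unfold grad
  refine continuous_pi fun k => continuous_pi fun l => ?_
  exact hc.clm_apply continuous_const

lemma continuous_entry {n : ℕ} {X : Type*} [TopologicalSpace X]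
    {A : X → Matrix (Fin n) (Fin n) ℝ} (hA : Continuous A) (k l : Fin n) :
    Continuous fun x => A x k l :=
  (continuous_apply l).comp ((continuous_apply k).comp hA)

lemma continuous_frobInner {n : ℕ} {X : Type*} [TopologicalSpace X]
    {A B : X → Matrix (Fin n) (Fin n) ℝ} (hA : Continuous A) (hB : Continuous B) :
    Continuous fun x => frobInner (A x) (B x) := by
  unfold frobInner
  exact continuous_finset_sum _ fun i _ => continuous_finset_sum _ fun j _ =>
    (continuous_entry hA i j).mul (continuous_entry hB i j)

lemma continuous_frobNorm {n : ℕ} {X : Type*} [TopologicalSpace X]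
    {A : X → Matrix (Fin n) (Fin n) ℝ} (hA : Continuous A) :
    Continuous fun x => frobNorm (A x) := by
  unfold frobNorm
  exact Real.continuous_sqrt.comp <| continuous_finset_sum _ fun i _ =>
    continuous_finset_sum _ fun j _ => (continuous_entry hA i j).pow 2

lemma continuous_matmul {n : ℕ} {X : Type*} [TopologicalSpace X]
    {A B : X → Matrix (Fin n) (Fin n) ℝ} (hA : Continuous A) (hB : Continuous B) :
    Continuous fun x => A x * B x := by
  refine continuous_pi fun k => continuous_pi fun l => ?_
  simp only [Matrix.mul_apply]
  exact continuous_finset_sum _ fun m _ =>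
    (continuous_entry hA k m).mul (continuous_entry hB m l)

lemma continuous_transpose' {n : ℕ} {X : Type*} [TopologicalSpace X]
    {A : X → Matrix (Fin n) (Fin n) ℝ} (hA : Continuous A) :
    Continuous fun x => (A x)ᵀ :=
  continuous_pi fun k => continuous_pi fun l => continuous_entry hA l k

lemma continuous_projGrad {n : ℕ} {f : Matrix (Fin n) (Fin n) ℝ → ℝ} (hf : ContDiff ℝ (⊤ : ℕ∞) f) :
    Continuous fun Q : Matrix (Fin n) (Fin n) ℝ => projGrad f Q := by
  have hg := continuous_grad hf
  have hLam : Continuous fun Q : Matrix (Fin n) (Fin n) ℝ => Lam f Q := by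
    unfold Lam
    exact ((continuous_matmul (continuous_transpose' continuous_id) hg).sub
      (continuous_matmul (continuous_transpose' hg) continuous_id)).const_smul (1 / 2 : ℝ)
  exact continuous_matmul continuous_id hLam

lemma frobNorm_pos {n : ℕ} {A : Matrix (Fin n) (Fin n) ℝ} (h : A ≠ 0) : 0 < frobNorm A := by
  unfold frobNorm
  apply Real.sqrt_pos.2
  have hne : ∃ k l, A k l ≠ 0 := by
    by_contra hc
    push_neg at hc
    exact h (by ext k l; simp [hc])
  obtain ⟨k, l, hkl⟩ := hne
  have hpos : (0:ℝ) < A k l ^ 2 := by positivity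
  calc (0:ℝ) < A k l ^ 2 := hpos
    _ ≤ ∑ j, A k j ^ 2 := Finset.single_le_sum (f := fun j => A k j ^ 2)
        (fun j _ => sq_nonneg _) (Finset.mem_univ l)
    _ ≤ ∑ i, ∑ j, A i j ^ 2 :=
        Finset.single_le_sum (f := fun i => ∑ j, A i j ^ 2)
          (fun i _ => Finset.sum_nonneg fun j _ => sq_nonneg _) (Finset.mem_univ k)

lemma isCompact_SOn (n : ℕ) : IsCompact (SOn n) := by
  haveI : ProperSpace (Matrix (Fin n) (Fin n) ℝ) := FiniteDimensional.proper ℝ _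
  apply Metric.isCompact_of_isClosed_isBounded
  · have h1 : IsClosed {Q : Matrix (Fin n) (Fin n) ℝ | Qᵀ * Q = 1} := by
      apply isClosed_eq (continuous_matmul ?_ continuous_id) continuous_const
      exact continuous_transpose' continuous_id
    have h2 : IsClosed {Q : Matrix (Fin n) (Fin n) ℝ | Q.det = 1} :=
      isClosed_eq (Continuous.matrix_det continuous_id) continuous_const
    exact h1.inter h2
  · apply (Metric.isBounded_closedBall (x := (0:Matrix (Fin n) (Fin n) ℝ))
      (r := Real.sqrt n)).subset
    rintro Q ⟨hQ, -⟩
    have hdiag : ∀ i, ∑ k, Q k i * Q k i = 1 := by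
      intro i
      have := congrFun (congrFun hQ i) i
      simpa [Matrix.mul_apply, Matrix.one_apply] using this
    have hsum : ∑ i, ∑ k, (Q i k) ^ 2 = (n : ℝ) := by
      rw [Finset.sum_comm]
      calc ∑ k : Fin n, ∑ i : Fin n, Q i k ^ 2
          = ∑ k : Fin n, (1:ℝ) := by
            refine Finset.sum_congr rfl fun k _ => ?_
            rw [← hdiag k]
            exact Finset.sum_congr rfl fun i _ => (sq (Q i k)) ▸ rfl
        _ = n := by simp
    simp only [Metric.mem_closedBall, dist_zero_right]
    rw [Matrix.frobenius_norm_def]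
    have h' : (∑ i, ∑ j, ‖Q i j‖ ^ (2:ℝ)) = (n:ℝ) := by
      refine (Finset.sum_congr rfl fun i _ => Finset.sum_congr rfl fun j _ => ?_).trans hsum
      rw [Real.rpow_two, Real.norm_eq_abs, sq_abs]
    rw [h', ← Real.sqrt_eq_rpow]

lemma uniform_gain {n : ℕ} {f : Matrix (Fin n) (Fin n) ℝ → ℝ} (hf : ContDiff ℝ (⊤ : ℕ∞) f)
    {c : ℝ} (hc : 0 < c) (i j : Fin n) (hij : i ≠ j) :
    ∃ δ > 0, ∀ Q ∈ SOn n, c ≤ |frobInner (projGrad f Q) (Q * deltaMat i j)| →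
      ∃ θ, f Q + δ ≤ f (Q * givens i j θ) := by
  classical
  set K : Set (Matrix (Fin n) (Fin n) ℝ) :=
    {Q | Q ∈ SOn n ∧ c ≤ |frobInner (projGrad f Q) (Q * deltaMat i j)|} with hKdef
  have hKc : IsCompact K := by
    have hcl : IsClosed {Q : Matrix (Fin n) (Fin n) ℝ |
        c ≤ |frobInner (projGrad f Q) (Q * deltaMat i j)|} := by
      apply isClosed_le continuous_const
      exact continuous_abs.comp (continuous_frobInner (continuous_projGrad hf)
        (continuous_matmul continuous_id continuous_const))
    exact (isCompact_SOn n).inter_right hcl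
  -- pointwise increase
  have hpt : ∀ Q ∈ K, ∃ θ, f Q < f (Q * givens i j θ) := by
    rintro Q ⟨hQ1, hQ2⟩
    apply exists_increase hf hij Q
    rw [← frobInner_projGrad f hQ1.1 hij]
    intro h0
    rw [h0] at hQ2
    simpa using lt_of_lt_of_le hc hQ2
  choose! θ0 hθ0 using hpt
  -- open cover
  set r : Matrix (Fin n) (Fin n) ℝ → ℝ :=
    fun Q => (f (Q * givens i j (θ0 Q)) - f Q) / 2 with hrdef
  set U : K → Set (Matrix (Fin n) (Fin n) ℝ) :=
    fun q => {Q' | f Q' + r q < f (Q' * givens i j (θ0 q))} with hUdef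
  have hUopen : ∀ q : K, IsOpen (U q) := by
    intro q
    exact isOpen_lt ((hf.continuous).add continuous_const)
      (hf.continuous.comp (continuous_matmul continuous_id continuous_const))
  have hUcover : K ⊆ ⋃ q : K, U q := by
    intro Q hQK
    refine Set.mem_iUnion.2 ⟨⟨Q, hQK⟩, ?_⟩
    have := hθ0 Q hQK
    simp only [hUdef, Set.mem_setOf_eq, hrdef]
    linarith
  obtain ⟨t, ht⟩ := hKc.elim_finite_subcover U hUopen hUcover
  by_cases hKne : K.Nonempty
  · obtain ⟨Q0, hQ0⟩ := hKne
    have htne : t.Nonempty := by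
      rcases Set.mem_iUnion₂.1 (ht hQ0) with ⟨q, hq, -⟩
      exact ⟨q, hq⟩
    refine ⟨t.inf' htne (fun q => r q), ?_, ?_⟩
    · show (0:ℝ) < _
      rw [Finset.lt_inf'_iff]
      rintro q hq
      have := hθ0 q q.2
      simp only [hrdef]
      linarith
    · intro Q hQ1 hQ2
      have hQK : Q ∈ K := ⟨hQ1, hQ2⟩
      rcases Set.mem_iUnion₂.1 (ht hQK) with ⟨q, hq, hQU⟩
      refine ⟨θ0 q, ?_⟩
      have h1 : f Q + r q < f (Q * givens i j (θ0 q)) := hQU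
      have h2 : t.inf' htne (fun q => r q) ≤ r q := Finset.inf'_le _ hq
      linarith
  · refine ⟨1, one_pos, ?_⟩
    intro Q hQ1 hQ2
    exact absurd (⟨hQ1, hQ2⟩ : Q ∈ K) (fun h => hKne ⟨Q, h⟩)

end Aux

theorem stmt_2 {n : ℕ} (hn : 2 ≤ n) (f : Matrix (Fin n) (Fin n) ℝ → ℝ)
    (hf : ContDiff ℝ (⊤ : ℕ∞) f)
    (ε : ℝ) (hε : 0 < ε) (hε2 : ε ≤ 2 / n)
    (Q : ℕ → Matrix (Fin n) (Fin n) ℝ) (hQ : ∀ k, Q k ∈ SOn n)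
    (hstep : ∀ k : ℕ, ∃ (i j : Fin n) (θ : ℝ), i < j ∧
      ε * frobNorm (projGrad f (Q k)) ≤ |frobInner (projGrad f (Q k)) (Q k * deltaMat i j)| ∧
      (∀ θ' : ℝ, f (Q k * givens i j θ') ≤ f (Q k * givens i j θ)) ∧
      Q (k + 1) = Q k * givens i j θ)
    (Qstar : Matrix (Fin n) (Fin n) ℝ)
    (hacc : ∃ φ : ℕ → ℕ, StrictMono φ ∧
      Filter.Tendsto (fun m => Q (φ m)) Filter.atTop (nhds Qstar)) :
    projGrad f Qstar = 0 := by
  classical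
  by_contra hne
  obtain ⟨φ, hφ, hlim⟩ := hacc
  set N := frobNorm (projGrad f Qstar) with hNdef
  have hN0 : 0 < N := frobNorm_pos hne
  -- eventually the norm is at least N/2 along the subsequence
  have hcont : Continuous fun Q' : Matrix (Fin n) (Fin n) ℝ => frobNorm (projGrad f Q') :=
    continuous_frobNorm (continuous_projGrad hf)
  have htend : Filter.Tendsto (fun m => frobNorm (projGrad f (Q (φ m)))) Filter.atTop (nhds N) :=
    (hcont.tendsto Qstar).comp hlim
  have hev : ∀ᶠ m in Filter.atTop, N / 2 < frobNorm (projGrad f (Q (φ m))) :=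
    htend.eventually (eventually_gt_nhds (by linarith))
  obtain ⟨M, hM⟩ := Filter.eventually_atTop.1 hev
  -- uniform gain δ
  set c := ε * (N / 2) with hcdef
  have hc0 : 0 < c := by positivity
  have hδ : ∀ p : Fin n × Fin n, ∃ δ, 0 < δ ∧ (p.1 ≠ p.2 →
      ∀ Q' ∈ SOn n, c ≤ |frobInner (projGrad f Q') (Q' * deltaMat p.1 p.2)| →
        ∃ θ, f Q' + δ ≤ f (Q' * givens p.1 p.2 θ)) := by
    intro p
    by_cases hp : p.1 ≠ p.2
    · obtain ⟨δ, hδ0, hδ⟩ := uniform_gain hf hc0 p.1 p.2 hp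
      exact ⟨δ, hδ0, fun _ => hδ⟩
    · exact ⟨1, one_pos, fun h => absurd h hp⟩
  choose δf hδf0 hδfP using hδ
  have hnpos : 0 < n := by omega
  have hFinNe : (Finset.univ : Finset (Fin n × Fin n)).Nonempty :=
    ⟨(⟨0, hnpos⟩, ⟨0, hnpos⟩), Finset.mem_univ _⟩
  set δ := Finset.univ.inf' hFinNe δf with hδdef
  have hδpos : 0 < δ := by
    rw [hδdef, Finset.lt_inf'_iff]
    exact fun p _ => hδf0 p
  -- monotonicity of f along the sequence
  have hmono : ∀ k, f (Q k) ≤ f (Q (k + 1)) := by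
    intro k
    obtain ⟨i, j, θ, hij, _, hmax, hQk⟩ := hstep k
    rw [hQk]
    have := hmax 0
    rwa [givens_zero, Matrix.mul_one] at this
  have hmono' : Monotone fun k => f (Q k) := monotone_nat_of_le_succ hmono
  -- f is bounded on SO(n)
  obtain ⟨B, hB⟩ : ∃ B, ∀ k, f (Q k) ≤ B := by
    have hSOne : (SOn n).Nonempty := ⟨1, by simp [SOn], by simp⟩
    obtain ⟨Qm, _, hQm⟩ := (isCompact_SOn n).exists_isMaxOn hSOne hf.continuous.continuousOn
    exact ⟨f Qm, fun k => hQm (hQ k)⟩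
  -- gain at each step along the subsequence
  have hgain : ∀ m, M ≤ m → f (Q (φ m)) + δ ≤ f (Q (φ m + 1)) := by
    intro m hm
    obtain ⟨i, j, θ, hij, hineq, hmax, hQk⟩ := hstep (φ m)
    have hcl : c ≤ |frobInner (projGrad f (Q (φ m))) (Q (φ m) * deltaMat i j)| := by
      refine le_trans ?_ hineq
      rw [hcdef]
      exact mul_le_mul_of_nonneg_left (hM m hm).le hε.le
    obtain ⟨θ', hθ'⟩ := hδfP (i, j) hij.ne (Q (φ m)) (hQ _) hcl
    have hδle : δ ≤ δf (i, j) := Finset.inf'_le _ (Finset.mem_univ _)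
    calc f (Q (φ m)) + δ ≤ f (Q (φ m)) + δf (i, j) := by linarith
      _ ≤ f (Q (φ m) * givens i j θ') := hθ'
      _ ≤ f (Q (φ m) * givens i j θ) := hmax θ'
      _ = f (Q (φ m + 1)) := by rw [hQk]
  -- iterate the gain
  have hiter : ∀ t : ℕ, f (Q (φ M)) + t * δ ≤ f (Q (φ (M + t))) := by
    intro t
    induction t with
    | zero => simp
    | succ t ih =>
      have h1 : f (Q (φ (M + t))) + δ ≤ f (Q (φ (M + t) + 1)) := hgain _ (Nat.le_add_right M t)
      have h2 : φ (M + t) + 1 ≤ φ (M + t + 1) := hφ (Nat.lt_succ_self _)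
      have h3 : f (Q (φ (M + t) + 1)) ≤ f (Q (φ (M + t + 1))) := hmono' h2
      have : f (Q (φ M)) + t * δ + δ ≤ f (Q (φ (M + t + 1))) := by linarith
      calc f (Q (φ M)) + (t + 1 : ℕ) * δ = f (Q (φ M)) + t * δ + δ := by
            push_cast; ring
        _ ≤ f (Q (φ (M + t + 1))) := this
      -- note: M + (t+1) = M + t + 1
  -- contradiction with boundedness
  obtain ⟨t, ht⟩ := exists_nat_gt ((B - f (Q (φ M))) / δ)
  have h1 : B - f (Q (φ M)) < t * δ := by
    rw [div_lt_iff₀ hδpos] at ht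
    linarith
  have h2 := hiter t
  have h3 := hB (φ (M + t))
  linarith
end

section
/- Let n ≥ 2, d ≥ 1, and let A : (Fin d → Fin n) → ℝ be a symmetric d-th order tensor. Define f(Q) := Σ_{j=1}^n (W(Q)(j,…,j))², where W(Q)(i₁,…,i_d) := Σ_{p₁,…,p_d} A(p₁,…,p_d) Q_{p₁ i₁} ⋯ Q_{p_d i_d}. Then for every Q ∈ SO(n), every pair 1 ≤ i < j ≤ n, and every θ ∈ ℝ: f(Q G(i,j,θ + π/2)) = f(Q G(i,j,θ)). -/
open Matrix Real Filter Set

attribute [local instance] Matrix.frobeniusNormedAddCommGroup Matrix.frobeniusNormedSpace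

/-!
`G(i,j,θ + π/2) = G(i,j,θ) G(i,j,π/2)`, and right multiplication by `G(i,j,π/2)` puts
column `j` in position `i` and minus column `i` in position `j`. The diagonal entry
`W(Q)(l,…,l)` is the form `A(q, …, q)` at the `l`-th column `q` of `Q`, homogeneous of degree `d`
in `q`, so its square, and hence `f`, is unchanged when columns are permuted or negated.
-/

section Givens

variable {m : Type*} {n : ℕ} {i j : Fin n}

theorem mul_givens_pi_div_two_apply (hij : i ≠ j) (N : Matrix m (Fin n) ℝ) (k : m) (l : Fin n) :
    (N * givens i j (π / 2)) k l = if l = i then N k j else if l = j then -N k i else N k l := by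
  rw [mul_apply]
  split_ifs with hli hlj
  · rw [Finset.sum_eq_single j
      (fun x _ hx => by simp +contextual [givens, hli, hx, hij]) (by simp)]
    simp [givens, hli, hij, hij.symm]
  · rw [Finset.sum_eq_single i
      (fun x _ hx => by simp +contextual [givens, hlj, hx, hij.symm]) (by simp)]
    simp [givens, hlj, hij, hij.symm]
  · simp [givens, hli, hlj]

theorem givens_add_pi_div_two (hij : i ≠ j) (θ : ℝ) :
    givens i j (θ + π / 2) = givens i j θ * givens i j (π / 2) := by
  ext k l
  rw [mul_givens_pi_div_two_apply hij]
  split_ifs with hli hlj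
  · subst hli
    by_cases hki : k = l <;> by_cases hkj : k = j <;>
      simp [givens, hki, hkj, hij, hij.symm, cos_add_pi_div_two, sin_add_pi_div_two]
  · subst hlj
    by_cases hki : k = i <;> by_cases hkj : k = l <;>
      simp [givens, hki, hkj, hij, hij.symm, cos_add_pi_div_two, sin_add_pi_div_two]
  · by_cases hkl : k = l <;> simp [givens, hli, hlj, hkl]

end Givens

section TensorForm

variable {ι : Type*} [Fintype ι] {d : ℕ}

def tensorForm (A : (Fin d → ι) → ℝ) (v : ι → ℝ) : ℝ :=
  ∑ p, A p * ∏ k, v (p k)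

theorem tensorForm_neg (A : (Fin d → ι) → ℝ) (v : ι → ℝ) :
    tensorForm A (-v) = (-1) ^ d * tensorForm A v := by
  simp only [tensorForm, Pi.neg_apply, neg_eq_neg_one_mul (v _), Finset.prod_mul_distrib,
    Finset.prod_const, Finset.card_univ, Fintype.card_fin, Finset.mul_sum]
  exact Finset.sum_congr rfl fun p _ => by ring

theorem sq_tensorForm_neg (A : (Fin d → ι) → ℝ) (v : ι → ℝ) :
    tensorForm A (-v) ^ 2 = tensorForm A v ^ 2 := by
  rw [tensorForm_neg, mul_pow, ← pow_mul, pow_mul', neg_one_sq, one_pow, one_mul]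

end TensorForm

theorem sum_sq_tensorForm_mul_givens_pi_div_two {n d : ℕ} (A : (Fin d → Fin n) → ℝ)
    {i j : Fin n} (hij : i ≠ j) (N : Matrix (Fin n) (Fin n) ℝ) :
    ∑ l, tensorForm A (fun k => (N * givens i j (π / 2)) k l) ^ 2 =
      ∑ l, tensorForm A (fun k => N k l) ^ 2 := by
  simp only [mul_givens_pi_div_two_apply hij]
  refine Fintype.sum_equiv (Equiv.swap i j) _ _ fun l => ?_
  by_cases hli : l = i
  · simp [hli]
  by_cases hlj : l = j
  · subst hlj
    simp only [hli, if_false, if_true, Equiv.swap_apply_right]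
    exact sq_tensorForm_neg A fun k => N k i
  · simp [hli, hlj, Equiv.swap_apply_of_ne_of_ne hli hlj]

theorem stmt_15_general {n d : ℕ} (A : (Fin d → Fin n) → ℝ)
    (f : Matrix (Fin n) (Fin n) ℝ → ℝ)
    (hf : ∀ Q, f Q = ∑ j, (∑ p : Fin d → Fin n, A p * ∏ k, Q (p k) j) ^ 2)
    (Q : Matrix (Fin n) (Fin n) ℝ)
    (i j : Fin n) (hij : i < j) (θ : ℝ) :
    f (Q * givens i j (θ + π / 2)) = f (Q * givens i j θ) := by
  rw [hf, hf, givens_add_pi_div_two hij.ne, ← Matrix.mul_assoc]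
  exact sum_sq_tensorForm_mul_givens_pi_div_two A hij.ne _

theorem stmt_15 {n d : ℕ} (hn : 2 ≤ n) (hd : 1 ≤ d) (A : (Fin d → Fin n) → ℝ)
    (hsym : ∀ (p : Fin d → Fin n) (σ : Equiv.Perm (Fin d)), A (p ∘ σ) = A p)
    (f : Matrix (Fin n) (Fin n) ℝ → ℝ)
    (hf : ∀ Q, f Q = ∑ j, (∑ p : Fin d → Fin n, A p * ∏ k, Q (p k) j) ^ 2)
    (Q : Matrix (Fin n) (Fin n) ℝ) (hQ : Q ∈ SOn n)
    (i j : Fin n) (hij : i < j) (θ : ℝ) :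
    f (Q * givens i j (θ + π / 2)) = f (Q * givens i j θ) :=
  stmt_15_general A f hf Q i j hij θ
end
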